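/- Let R and S be Dyck paths of the same length 2n, both avoiding three consecutive north steps NNN, and let P = φ(R), Q = φ(S) be the corresponding Motzkin paths. Then P ≤_M Q in the partial order on Motzkin paths if and only if R ≤_D S in the Tamari order on Dyck paths and Type(R) = Type(S). -/

import Mathlib

/-- Steps: north `N = (0,1)`, east `E = (1,0)`, diagonal `D = (1,1)`. -/
inductive MStep : Type
  | N | E | D
  deriving DecidableEq

/-- The contribution of a step to the height `y - x` above the diagonal. -/
def MStep.hdiff : MStep → ℤ
  | .N => 1
  | .E => -1
  | .D => 0

/-- The total height change `y - x` along a word of steps. -/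
def wsum (p : List MStep) : ℤ := (p.map MStep.hdiff).sum

/-- A (nonempty) Motzkin path: starts at the origin, never goes below the
diagonal `y = x`, and ends on the diagonal. -/
def IsMotzkin (p : List MStep) : Prop :=
  p ≠ [] ∧ (∀ q, q <+: p → 0 ≤ wsum q) ∧ wsum p = 0

/-- A Dyck path is a Motzkin path with no diagonal step. -/
def IsDyck (p : List MStep) : Prop := IsMotzkin p ∧ MStep.D ∉ p

/-- A path is primitive if it touches the diagonal only at its endpoints. -/
def IsPrimitive (p : List MStep) : Prop :=
  IsMotzkin p ∧ ∀ q, q <+: p → q ≠ [] → q ≠ p → 0 < wsum q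

/-- Covering relation for the Tamari-type order on Motzkin paths:
`Q` covers `P` iff `P = P₁·E·P₂·P₃` and `Q = P₁·P₂·E·P₃` with `P₂` a nonempty
primitive Motzkin path. -/
def MCover (P Q : List MStep) : Prop :=
  ∃ P₁ P₂ P₃ : List MStep, IsMotzkin P₂ ∧ IsPrimitive P₂ ∧
    P = P₁ ++ [MStep.E] ++ P₂ ++ P₃ ∧ Q = P₁ ++ P₂ ++ [MStep.E] ++ P₃

/-- Covering relation of the Tamari order on Dyck paths. -/
def DCover (P Q : List MStep) : Prop :=
  ∃ P₁ P₂ P₃ : List MStep, IsDyck P₂ ∧ IsPrimitive P₂ ∧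
    P = P₁ ++ [MStep.E] ++ P₂ ++ P₃ ∧ Q = P₁ ++ P₂ ++ [MStep.E] ++ P₃

/-- The partial order `≤_M` on Motzkin paths. -/
def MLE : List MStep → List MStep → Prop := Relation.ReflTransGen MCover

/-- The Tamari order `≤_D` on Dyck paths. -/
def DLE : List MStep → List MStep → Prop := Relation.ReflTransGen DCover

/-- Heights of the diagonal steps along a path, starting from height `h`. -/
def clsFrom : List MStep → ℤ → List ℤ
  | [], _ => []
  | .N :: rest, h => clsFrom rest (h + 1)
  | .E :: rest, h => clsFrom rest h
  | .D :: rest, h => (h + 1) :: clsFrom rest (h + 1)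

/-- The class of a Motzkin path: the sequence of heights (ending `y`-coordinates)
of its diagonal steps, in the order they occur. -/
def cls (p : List MStep) : List ℤ := clsFrom p 0

/-- A path avoids `NNN` if it has no three consecutive north steps. -/
def AvoidsNNN (p : List MStep) : Prop := ¬ ([MStep.N, MStep.N, MStep.N] <:+: p)

/-- Callan's bijection `φ`: replace each factor `NE` by `D` and each factor
`NNE` by `N`, leaving remaining east steps unchanged. -/
def phi : List MStep → List MStep
  | [] => []
  | .N :: .N :: .E :: rest => .N :: phi rest
  | .N :: .E :: rest => .D :: phi rest
  | s :: rest => s :: phi rest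

/-- The inverse of `φ`: replace each `D` by `NE` and each `N` by `NNE`. -/
def psi : List MStep → List MStep
  | [] => []
  | .N :: rest => .N :: .N :: .E :: psi rest
  | .D :: rest => .N :: .E :: psi rest
  | .E :: rest => .E :: psi rest

/-- For each north step of the path (in order), record `N` if it is immediately
followed by an east step and `E` otherwise. -/
def typeRaw : List MStep → List MStep
  | [] => []
  | .N :: rest => (if rest.head? = some MStep.E then MStep.N else MStep.E) :: typeRaw rest
  | _ :: rest => typeRaw rest

/-- The type of a Dyck path of length `2n`: the word of length `n - 1` whose
`i`-th letter is `N` iff the `i`-th north step is immediately followed by an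
east step (the letter of the last north step is dropped). -/
def typeW (p : List MStep) : List MStep := (typeRaw p).dropLast

/-- `ds p` is the number of north steps of `p` that are neither immediately
preceded nor immediately followed by another north step. -/
def ds (p : List MStep) : ℕ :=
  ((Finset.range p.length).filter (fun i =>
    p[i]? = some MStep.N ∧ p[i + 1]? ≠ some MStep.N ∧
      (i = 0 ∨ p[i - 1]? ≠ some MStep.N))).card

/-- The number of contacts of a path with the diagonal `y = x` (lattice points
of the path lying on the diagonal, endpoints included). -/
def cont (p : List MStep) : ℕ :=
  ((Finset.range (p.length + 1)).filter (fun i => wsum (p.take i) = 0)).card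

/-!
`ψ` inverts `φ` on the words with no `D`, no `NNN` and no final `N`, which include the Dyck
paths avoiding `NNN`. It is a monoid morphism sending primitive Motzkin paths to primitive Dyck
paths, so it maps `≤_M` into `≤_D`; and since `ψ(E) = E` carries no north step, the type of
`ψ(P)` is unchanged by a Motzkin cover.

Conversely, a Tamari cover `P₁·E·P₂·P₃ → P₁·P₂·E·P₃` changes the type in at most one letter,
the one of a north step ending `P₁`, which drops from `N` to `E`. So the number of `N`s in the type
decreases weakly along a Tamari chain; if the types at both ends agree it is constant, no `P₁` in
the chain ends with `N`, every path of the chain is a word `ψ(m)`, and each cover is the `ψ`-image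
of a Motzkin cover.
-/

open MStep

@[simp] lemma wsum_nil : wsum [] = 0 := rfl

@[simp] lemma wsum_cons (a : MStep) (l : List MStep) : wsum (a :: l) = a.hdiff + wsum l := by
  simp [wsum]

@[simp] lemma wsum_append (a b : List MStep) : wsum (a ++ b) = wsum a + wsum b := by
  simp [wsum]

lemma psi_append (a b : List MStep) : psi (a ++ b) = psi a ++ psi b := by
  induction a with
  | nil => rfl
  | cons x r ih => cases x <;> simp [psi, ih]

@[simp] lemma psi_eq_nil {a : List MStep} : psi a = [] ↔ a = [] := by
  cases a with
  | nil => simp [psi]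
  | cons x r => cases x <;> simp [psi]

@[simp] lemma wsum_psi (a : List MStep) : wsum (psi a) = wsum a := by
  induction a with
  | nil => rfl
  | cons x r ih => cases x <;> simp [psi, ih, hdiff]

lemma D_notMem_psi (a : List MStep) : D ∉ psi a := by
  induction a with
  | nil => simp [psi]
  | cons x r ih => cases x <;> simp [psi, ih]

lemma getLast?_psi_ne_N (a : List MStep) : (psi a).getLast? ≠ some N := by
  induction a with
  | nil => simp [psi]
  | cons x r ih =>
    rw [← List.singleton_append, psi_append, List.getLast?_append]
    cases h : (psi r).getLast? <;> cases x <;> simp_all [psi]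

lemma avoidsNNN_psi (a : List MStep) : AvoidsNNN (psi a) := by
  induction a with
  | nil => simp [AvoidsNNN, psi]
  | cons x r ih =>
    unfold AvoidsNNN at ih ⊢
    cases x <;> simp [psi, List.infix_cons_iff, ih]

lemma phi_psi (a : List MStep) : phi (psi a) = a := by
  induction a with
  | nil => rfl
  | cons x r ih => cases x <;> simp [psi, phi, ih]

lemma psi_injective : Function.Injective psi :=
  Function.LeftInverse.injective phi_psi

lemma psi_prefix_psi {a b : List MStep} (h : a <+: b) : psi a <+: psi b := by
  obtain ⟨r, rfl⟩ := h
  exact ⟨psi r, (psi_append a r).symm⟩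

/-- The words `psi m`, characterized intrinsically (see `isPsiImage_psi` and `psi_phi`). -/
def IsPsiImage (p : List MStep) : Prop :=
  D ∉ p ∧ AvoidsNNN p ∧ p.getLast? ≠ some N

lemma isPsiImage_psi (a : List MStep) : IsPsiImage (psi a) :=
  ⟨D_notMem_psi a, avoidsNNN_psi a, getLast?_psi_ne_N a⟩

lemma IsPsiImage.of_cons {x : MStep} {r : List MStep} (h : IsPsiImage (x :: r)) :
    IsPsiImage r := by
  obtain ⟨hD, hA, hL⟩ := h
  refine ⟨fun hm => hD (List.mem_cons_of_mem _ hm),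
    fun hr => hA (hr.trans (List.suffix_cons x r).isInfix), ?_⟩
  cases r with
  | nil => simp
  | cons y s => rwa [List.getLast?_cons_cons] at hL

theorem psi_phi : ∀ p : List MStep, IsPsiImage p → psi (phi p) = p
  | [], _ => rfl
  | E :: r, h => by simp [phi, psi, psi_phi r h.of_cons]
  | D :: _, h => absurd List.mem_cons_self h.1
  | N :: N :: E :: r, h => by simp [phi, psi, psi_phi r h.of_cons.of_cons.of_cons]
  | N :: E :: r, h => by simp [phi, psi, psi_phi r h.of_cons.of_cons]
  | [N], h => absurd rfl h.2.2
  | [N, N], h => absurd rfl h.2.2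
  | N :: D :: _, h => absurd (by simp) h.1
  | N :: N :: D :: _, h => absurd (by simp) h.1
  | N :: N :: N :: r, h => absurd (List.prefix_append _ r).isInfix h.2.1

lemma eq_nil_or_eq_or_wsum_pos_of_prefix_psi_singleton (c : MStep) {q : List MStep}
    (hq : q <+: psi [c]) : q = [] ∨ q = psi [c] ∨ 0 < wsum q := by
  rw [← List.mem_inits] at hq
  cases c <;> simp [psi] at hq <;> rcases hq with rfl | rfl | rfl | rfl <;> simp [psi, hdiff]

lemma exists_prefix_of_prefix_psi (x : List MStep) {q : List MStep} (hq : q <+: psi x) :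
    ∃ y, y <+: x ∧ (q = psi y ∨ y ≠ x ∧ wsum y < wsum q) := by
  induction x generalizing q with
  | nil => exact ⟨[], List.nil_prefix, Or.inl (List.prefix_nil.1 hq)⟩
  | cons c r ih =>
    obtain ⟨t, ht⟩ := hq
    rw [← List.singleton_append, psi_append] at ht
    rcases List.append_eq_append_iff.1 ht with ⟨a, hc, -⟩ | ⟨q', rfl, hr⟩
    · rcases eq_nil_or_eq_or_wsum_pos_of_prefix_psi_singleton c ⟨a, hc.symm⟩ with
        rfl | rfl | hpos
      · exact ⟨[], List.nil_prefix, Or.inl rfl⟩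
      · exact ⟨[c], List.prefix_append _ _, Or.inl rfl⟩
      · exact ⟨[], List.nil_prefix, Or.inr ⟨by simp, hpos⟩⟩
    · obtain ⟨y, hy, hq'⟩ := ih ⟨t, hr.symm⟩
      refine ⟨c :: y, List.cons_prefix_cons.2 ⟨rfl, hy⟩, ?_⟩
      rcases hq' with rfl | ⟨hne, hlt⟩
      · exact Or.inl (psi_append [c] y).symm
      · refine Or.inr ⟨by simpa using hne, ?_⟩
        have := wsum_psi [c]
        simp only [wsum_cons, wsum_nil, wsum_append] at this ⊢
        omega

lemma isMotzkin_psi {m : List MStep} (hm : IsMotzkin m) : IsMotzkin (psi m) := by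
  obtain ⟨hne, hpre, hz⟩ := hm
  refine ⟨by simpa using hne, fun q hq => ?_, by simpa using hz⟩
  obtain ⟨y, hy, rfl | ⟨-, hlt⟩⟩ := exists_prefix_of_prefix_psi m hq
  · simpa using hpre y hy
  · exact (hpre y hy).trans hlt.le

lemma isPrimitive_psi {m : List MStep} (hm : IsPrimitive m) : IsPrimitive (psi m) := by
  obtain ⟨hmot, hprim⟩ := hm
  refine ⟨isMotzkin_psi hmot, fun q hq hqne hqm => ?_⟩
  obtain ⟨y, hy, rfl | ⟨-, hlt⟩⟩ := exists_prefix_of_prefix_psi m hq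
  · simpa using hprim y hy (by simpa using hqne) (fun h => hqm (h ▸ rfl))
  · exact (hmot.2.1 y hy).trans_lt hlt

lemma isPrimitive_of_psi {m : List MStep} (hm : IsPrimitive (psi m)) : IsPrimitive m := by
  obtain ⟨⟨hne, hpre, hz⟩, hprim⟩ := hm
  refine ⟨⟨by simpa using hne, fun q hq => ?_, by simpa using hz⟩, fun q hq hqne hqm => ?_⟩
  · simpa using hpre _ (psi_prefix_psi hq)
  · simpa using hprim _ (psi_prefix_psi hq) (by simpa using hqne) (psi_injective.ne hqm)

lemma IsMotzkin.head?_ne_E {p : List MStep} (hp : IsMotzkin p) : p.head? ≠ some E := by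
  intro h
  obtain ⟨t, rfl⟩ : ∃ t, p = E :: t := by
    cases p <;> simp_all
  simpa [hdiff] using hp.2.1 [E] ⟨t, rfl⟩

lemma IsMotzkin.getLast?_ne_N {p : List MStep} (hp : IsMotzkin p) : p.getLast? ≠ some N := by
  intro h
  obtain ⟨hne, hpre, hz⟩ := hp
  have hsplit := congrArg wsum (List.dropLast_append_getLast hne)
  rw [List.getLast?_eq_some_getLast hne, Option.some_inj] at h
  have := hpre _ (List.dropLast_prefix p)
  rw [wsum_append, h, hz] at hsplit
  simp [hdiff] at hsplit
  omega

lemma IsDyck.head?_eq_N {p : List MStep} (hp : IsDyck p) : p.head? = some N := by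
  have := hp.1.head?_ne_E
  cases p with
  | nil => exact absurd rfl hp.1.1
  | cons x t => cases x <;> simp_all [IsDyck]

lemma IsDyck.getLast?_eq_E {p : List MStep} (hp : IsDyck p) : p.getLast? = some E := by
  have := hp.1.getLast?_ne_N
  obtain ⟨x, hx⟩ := Option.ne_none_iff_exists'.1 (List.getLast?_eq_none_iff.not.2 hp.1.1)
  have := List.mem_of_getLast? hx
  cases x <;> simp_all [hp.2]

lemma IsDyck.isPsiImage {p : List MStep} (hp : IsDyck p) (ha : AvoidsNNN p) : IsPsiImage p :=
  ⟨hp.2, ha, hp.1.getLast?_ne_N⟩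

lemma MCover.dcover_psi {P Q : List MStep} (h : MCover P Q) : DCover (psi P) (psi Q) := by
  obtain ⟨P₁, P₂, P₃, -, hprim, rfl, rfl⟩ := h
  exact ⟨psi P₁, psi P₂, psi P₃, ⟨(isPrimitive_psi hprim).1, D_notMem_psi P₂⟩,
    isPrimitive_psi hprim, by simp [psi_append, psi], by simp [psi_append, psi]⟩

lemma MLE.dle_psi {P Q : List MStep} (h : MLE P Q) : DLE (psi P) (psi Q) :=
  h.lift psi fun _ _ => MCover.dcover_psi

/-- `typeRaw` of a word that is followed by a word with first letter `h`
(`h = none`: followed by nothing). -/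
def typeRawThen : List MStep → Option MStep → List MStep
  | [], _ => []
  | N :: rest, h => (if rest.head?.or h = some E then N else E) :: typeRawThen rest h
  | _ :: rest, h => typeRawThen rest h

lemma typeRaw_eq_typeRawThen (p : List MStep) : typeRaw p = typeRawThen p none := by
  induction p with
  | nil => rfl
  | cons x r ih => cases x <;> simp [typeRaw, typeRawThen, ih]

lemma typeRaw_append (a b : List MStep) :
    typeRaw (a ++ b) = typeRawThen a b.head? ++ typeRaw b := by
  induction a with
  | nil => rfl
  | cons x r ih => cases x <;> simp [typeRaw, typeRawThen, ih, List.head?_append]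

lemma typeRawThen_congr {a : List MStep} (ha : a.getLast? ≠ some N) (h h' : Option MStep) :
    typeRawThen a h = typeRawThen a h' := by
  induction a with
  | nil => rfl
  | cons x r ih =>
    cases r with
    | nil => cases x <;> simp_all [typeRawThen]
    | cons y s =>
      rw [List.getLast?_cons_cons] at ha
      cases x <;> simp [typeRawThen, ih ha]

lemma typeRawThen_eq_nil {a : List MStep} {h : Option MStep} :
    typeRawThen a h = [] ↔ N ∉ a := by
  induction a with
  | nil => simp [typeRawThen]
  | cons x r ih => cases x <;> simp [typeRawThen, ih]

/-- Only the letter of a final north step sees the continuation. -/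
lemma count_typeRawThen (a : List MStep) :
    (typeRawThen a (some E)).count N =
      (typeRawThen a (some N)).count N + if a.getLast? = some N then 1 else 0 := by
  induction a with
  | nil => rfl
  | cons x r ih =>
    cases r with
    | nil => cases x <;> simp [typeRawThen]
    | cons y s =>
      rw [List.getLast?_cons_cons]
      cases x <;> simp [typeRawThen, List.count_cons, ih]; omega

lemma typeRaw_psi_append (a b : List MStep) :
    typeRaw (psi (a ++ b)) = typeRaw (psi a) ++ typeRaw (psi b) := by
  rw [psi_append, typeRaw_append, typeRaw_eq_typeRawThen (psi a),
    typeRawThen_congr (getLast?_psi_ne_N a)]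

lemma MCover.typeRaw_psi {P Q : List MStep} (h : MCover P Q) :
    typeRaw (psi P) = typeRaw (psi Q) := by
  obtain ⟨P₁, P₂, P₃, -, -, rfl, rfl⟩ := h
  simp only [typeRaw_psi_append]
  simp [psi, typeRaw]

lemma MLE.typeRaw_psi {P Q : List MStep} (h : MLE P Q) : typeRaw (psi P) = typeRaw (psi Q) := by
  induction h with
  | refl => rfl
  | tail _ hc ih => exact ih.trans hc.typeRaw_psi

lemma count_typeW_cover {P₁ P₂ P₃ : List MStep} (hd : IsDyck P₂) :
    (typeW (P₁ ++ [E] ++ P₂ ++ P₃)).count N =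
      (typeW (P₁ ++ P₂ ++ [E] ++ P₃)).count N + if P₁.getLast? = some N then 1 else 0 := by
  set X := typeRawThen P₂ P₃.head? ++ typeRaw P₃
  have hX : X ≠ [] := by
    simp only [X, ne_eq, List.append_eq_nil_iff, typeRawThen_eq_nil, not_and]
    exact fun h => absurd (List.mem_of_mem_head? hd.head?_eq_N) h
  have hT : typeRaw (P₁ ++ [E] ++ P₂ ++ P₃) = typeRawThen P₁ (some E) ++ X := by
    simp [X, typeRaw_append, typeRaw]
  have hU : typeRaw (P₁ ++ P₂ ++ [E] ++ P₃) = typeRawThen P₁ (some N) ++ X := by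
    simp [X, typeRaw_append, typeRaw, List.head?_append, hd.head?_eq_N,
      typeRawThen_congr (a := P₂) (by simp [hd.getLast?_eq_E]) (some E) P₃.head?]
  simp only [typeW, hT, hU, List.dropLast_append_of_ne_nil hX, List.count_append,
    count_typeRawThen P₁]
  omega

lemma DCover.count_typeW_le {T U : List MStep} (h : DCover T U) :
    (typeW U).count N ≤ (typeW T).count N := by
  obtain ⟨P₁, P₂, P₃, hd, -, rfl, rfl⟩ := h
  rw [count_typeW_cover hd]
  omega

lemma DLE.count_typeW_le {T U : List MStep} (h : DLE T U) :
    (typeW U).count N ≤ (typeW T).count N := by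
  induction h with
  | refl => rfl
  | tail _ hc ih => exact hc.count_typeW_le.trans ih

lemma DCover.mcover_phi {T U : List MStep} (h : DCover T U) (hT : IsPsiImage T)
    (hc : (typeW U).count N = (typeW T).count N) :
    IsPsiImage U ∧ MCover (phi T) (phi U) := by
  obtain ⟨P₁, P₂, P₃, hd, hprim, rfl, rfl⟩ := h
  have hP₁ : P₁.getLast? ≠ some N := by
    intro hN
    have := count_typeW_cover (P₁ := P₁) (P₃ := P₃) hd
    simp only [hN, if_true] at this
    omega
  obtain ⟨hD, hA, hL⟩ := hT
  simp only [List.append_assoc, List.mem_append, List.mem_cons, not_or] at hD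
  have avoids {p : List MStep} (hp : p <:+: P₁ ++ [E] ++ P₂ ++ P₃) : AvoidsNNN p :=
    fun h => hA (h.trans hp)
  have g₁ : IsPsiImage P₁ := ⟨hD.1, avoids ⟨[], [E] ++ P₂ ++ P₃, by simp⟩, hP₁⟩
  have g₂ : IsPsiImage P₂ := hd.isPsiImage (avoids ⟨P₁ ++ [E], P₃, rfl⟩)
  have g₃ : IsPsiImage P₃ := by
    refine ⟨hD.2.2.2, avoids List.infix_append_right, ?_⟩
    cases P₃ with
    | nil => simp
    | cons y s => rwa [List.getLast?_append_of_ne_nil _ (List.cons_ne_nil y s)] at hL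
  have eT : P₁ ++ [E] ++ P₂ ++ P₃ = psi (phi P₁ ++ [E] ++ phi P₂ ++ phi P₃) := by
    simp [psi_append, psi, psi_phi _ g₁, psi_phi _ g₂, psi_phi _ g₃]
  have eU : P₁ ++ P₂ ++ [E] ++ P₃ = psi (phi P₁ ++ phi P₂ ++ [E] ++ phi P₃) := by
    simp [psi_append, psi, psi_phi _ g₁, psi_phi _ g₂, psi_phi _ g₃]
  have hprim' : IsPrimitive (phi P₂) := isPrimitive_of_psi (by rwa [psi_phi _ g₂])
  rw [eT, eU, phi_psi, phi_psi]
  exact ⟨isPsiImage_psi _, _, _, _, hprim'.1, hprim', rfl, rfl⟩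

lemma DLE.mle_phi {T S : List MStep} (h : DLE T S) (hT : IsPsiImage T)
    (hc : (typeW T).count N = (typeW S).count N) : MLE (phi T) (phi S) := by
  induction h using Relation.ReflTransGen.head_induction_on with
  | refl => exact .refl
  | head hTU hUS ih =>
    have hUT := hTU.count_typeW_le
    have hSU := DLE.count_typeW_le hUS
    obtain ⟨hU, hcov⟩ := hTU.mcover_phi hT (by omega)
    exact .head hcov (ih hU (by omega))

theorem phi_order_iff_general (R S : List MStep)
    (hR : IsDyck R) (hS : IsDyck S)
    (hRa : AvoidsNNN R) (hSa : AvoidsNNN S) :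
    MLE (phi R) (phi S) ↔ (DLE R S ∧ typeW R = typeW S) := by
  have gR := hR.isPsiImage hRa
  have hR' := psi_phi R gR
  have hS' := psi_phi S (hS.isPsiImage hSa)
  constructor
  · intro h
    refine ⟨hR' ▸ hS' ▸ h.dle_psi, ?_⟩
    rw [typeW, typeW, ← hR', ← hS', h.typeRaw_psi]
  · rintro ⟨hle, htype⟩
    exact hle.mle_phi gR (congrArg (List.count N) htype)

/-- For Dyck paths `R, S` of the same length `2n` avoiding
`NNN`, one has `φ R ≤_M φ S` iff `R ≤_D S` in the Tamari order and
`Type(R) = Type(S)`. -/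
theorem phi_order_iff (n : ℕ) (R S : List MStep)
    (hR : IsDyck R) (hS : IsDyck S)
    (hRn : R.length = 2 * n) (hSn : S.length = 2 * n)
    (hRa : AvoidsNNN R) (hSa : AvoidsNNN S) :
    MLE (phi R) (phi S) ↔ (DLE R S ∧ typeW R = typeW S) :=
  phi_order_iff_general R S hR hS hRa hSa
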